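/- Trace contamination: for any real matrices A ∈ ℝ^{2d_A×2d_A}, B ∈ ℝ^{2d_B×2d_B}, L ∈ ℝ^{2d_A×2d_A}, R ∈ ℝ^{2d_B×2d_B}, one has tr((A ⊗_R B)(L ⊗ R)) = tr((A ⊗_R B)(L ⊗_R R)), where ⊗ is the Kronecker product and ⊗_R is the R-product. -/
import Mathlib


open Kronecker Matrix

/-- 2×2 rotation matrix J = [[0,-1],[1,0]]. -/
def Jmat : Matrix (Fin 2) (Fin 2) ℝ := !![0, -1; 1, 0]

/-- Entrywise real part of a complex matrix. -/
def reM {d : ℕ} (A : Matrix (Fin d) (Fin d) ℂ) : Matrix (Fin d) (Fin d) ℝ :=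
  A.map Complex.re

/-- Entrywise imaginary part of a complex matrix. -/
def imM {d : ℕ} (A : Matrix (Fin d) (Fin d) ℂ) : Matrix (Fin d) (Fin d) ℝ :=
  A.map Complex.im

/-- The standard complex-to-real mapping Γ(A) = I ⊗ Re(A) + J ⊗ Im(A). -/
def Gamma {d : ℕ} (A : Matrix (Fin d) (Fin d) ℂ) :
    Matrix (Fin 2 × Fin d) (Fin 2 × Fin d) ℝ :=
  (1 : Matrix (Fin 2) (Fin 2) ℝ) ⊗ₖ reM A + Jmat ⊗ₖ imM A

/-- The projector P = (1/2)(1 − J_{d_A} ⊗ J_{d_B}) implementing I⁽²⁾ ⊗ 1 after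
permutation of tensor factors. -/
noncomputable def Pproj (dA dB : ℕ) :
    Matrix ((Fin 2 × Fin dA) × (Fin 2 × Fin dB)) ((Fin 2 × Fin dA) × (Fin 2 × Fin dB)) ℝ :=
  (1 / 2 : ℝ) •
    (1 - (Jmat ⊗ₖ (1 : Matrix (Fin dA) (Fin dA) ℝ)) ⊗ₖ
      (Jmat ⊗ₖ (1 : Matrix (Fin dB) (Fin dB) ℝ)))

/-- The R-product A ⊗_R B := P (A ⊗ B) P. -/
noncomputable def Rprod {dA dB : ℕ}
    (A : Matrix (Fin 2 × Fin dA) (Fin 2 × Fin dA) ℝ)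
    (B : Matrix (Fin 2 × Fin dB) (Fin 2 × Fin dB) ℝ) :
    Matrix ((Fin 2 × Fin dA) × (Fin 2 × Fin dB)) ((Fin 2 × Fin dA) × (Fin 2 × Fin dB)) ℝ :=
  Pproj dA dB * (A ⊗ₖ B) * Pproj dA dB


lemma Jmat_mul_Jmat : Jmat * Jmat = -1 := by
  ext i j
  fin_cases i <;> fin_cases j <;>
    simp [Jmat, Matrix.mul_apply, Fin.sum_univ_two, Matrix.one_apply]

lemma Pproj_idem (dA dB : ℕ) : Pproj dA dB * Pproj dA dB = Pproj dA dB := by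
  set K := (Jmat ⊗ₖ (1 : Matrix (Fin dA) (Fin dA) ℝ)) ⊗ₖ
      (Jmat ⊗ₖ (1 : Matrix (Fin dB) (Fin dB) ℝ)) with hK
  have hK2 : K * K = 1 := by
    rw [hK, ← Matrix.mul_kronecker_mul, ← Matrix.mul_kronecker_mul,
      ← Matrix.mul_kronecker_mul, Jmat_mul_Jmat]
    have hneg : (-1 : Matrix (Fin 2) (Fin 2) ℝ) = (-1 : ℝ) • 1 := by simp
    simp only [one_mul, mul_one, hneg, Matrix.smul_kronecker, Matrix.kronecker_smul,
      smul_smul, Matrix.one_kronecker_one]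
    norm_num
  unfold Pproj
  rw [← hK, Matrix.smul_mul, Matrix.mul_smul, sub_mul, mul_sub, mul_sub, hK2]
  simp only [one_mul, mul_one, smul_smul]
  norm_num
  module

theorem trace_contamination {dA dB : ℕ}
    (A L : Matrix (Fin 2 × Fin dA) (Fin 2 × Fin dA) ℝ)
    (B R : Matrix (Fin 2 × Fin dB) (Fin 2 × Fin dB) ℝ) :
    (Rprod A B * (L ⊗ₖ R)).trace = (Rprod A B * Rprod L R).trace := by
  unfold Rprod
  set P := Pproj dA dB with hP
  have h : P * P = P := Pproj_idem dA dB
  have key : ∀ X Y : Matrix ((Fin 2 × Fin dA) × (Fin 2 × Fin dB))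
      ((Fin 2 × Fin dA) × (Fin 2 × Fin dB)) ℝ,
      (P * X * P * Y).trace = (X * (P * Y * P)).trace := by
    intro X Y
    have e1 : P * X * P * Y = P * (X * P * Y) := by simp only [mul_assoc]
    have e2 : X * P * Y * P = X * (P * Y * P) := by simp only [mul_assoc]
    rw [e1, Matrix.trace_mul_comm, e2]
  have h3 : P * (P * ((L ⊗ₖ R)) * P) * P = P * ((L ⊗ₖ R)) * P := by
    have e : P * (P * ((L ⊗ₖ R)) * P) * P = P * P * ((L ⊗ₖ R)) * (P * P) := by
      simp only [mul_assoc]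
    rw [e, h]
  rw [key, key, h3]
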